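/- arXiv:2201.05733 — 8 statements merged into one kernel-verified Lean document; each statement's English description precedes it below -/
import Mathlib

section
/- For any n ≥ 4 and any k with 4 ≤ k ≤ n, the product r_k r_{k-1} r_k r_{k-1} r_{k-2} r_k r_2 equals the identity permutation of {1,...,n}. -/
/-- The prefix-reversal `r_m` on `{1, ..., n}` (encoded as `Fin n`, 0-indexed):
the 1-indexed entry `j` with `j ≤ m` is sent to `m + 1 - j`, and entries `j > m`
are fixed.  If `m > n` it is the identity. -/
def pancakeRev (n m : ℕ) : Equiv.Perm (Fin n) :=
  Function.Involutive.toPerm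
    (fun a => if h : a.val < m ∧ m ≤ n then ⟨m - 1 - a.val, by omega⟩ else a)
    (by
      intro a
      beta_reduce
      by_cases h : a.val < m ∧ m ≤ n
      · rw [dif_pos h]
        have h2 : m - 1 - a.val < m ∧ m ≤ n := by omega
        rw [dif_pos h2]
        apply Fin.ext
        simp
        omega
      · rw [dif_neg h, dif_neg h])

/-!
Writing `c` for the rotation `0 → 1 → ⋯ → k-1 → 0` of the first `k` entries
(`Fin.cycleRange`), one has `r_k r_{k-1} = c`. Moreover `r_{k-2} r_k` moves every entry
`j ≥ 2` of the first `k` down by two and sends `0, 1` to `k-1, k-2`, so `c² r_{k-2} r_k = r_2`.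
Hence the product is `r_2² = 1`.
-/

section

variable {n : ℕ}

theorem coe_pancakeRev_apply (m : ℕ) (a : Fin n) :
    (pancakeRev n m a : ℕ) = if a < m ∧ m ≤ n then m - 1 - a else a := by
  simp only [pancakeRev, Function.Involutive.toPerm, Equiv.coe_fn_mk]
  split_ifs <;> rfl

theorem pancakeRev_mul_self (m : ℕ) : pancakeRev n m * pancakeRev n m = 1 :=
  Equiv.ext (Function.Involutive.toPerm_involutive _)

theorem Fin.coe_cycleRange (i j : Fin n) :
    (Fin.cycleRange i j : ℕ) =
      if (j : ℕ) < i then (j : ℕ) + 1 else if (j : ℕ) = i then 0 else (j : ℕ) := by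
  rcases lt_or_ge i j with h | h
  · rw [Fin.cycleRange_of_gt h, if_neg (by omega), if_neg (by omega)]
  · rw [Fin.coe_cycleRange_of_le h]
    simp only [Fin.ext_iff]
    split_ifs <;> omega

theorem pancakeRev_succ_mul_pancakeRev_eq_cycleRange (i : Fin n) :
    pancakeRev n (i + 1) * pancakeRev n i = Fin.cycleRange i := by
  ext a
  simp only [Equiv.Perm.mul_apply, coe_pancakeRev_apply, Fin.coe_cycleRange]
  have := i.isLt
  split_ifs <;> omega

theorem cycleRange_mul_cycleRange_mul_pancakeRev_pred_mul_pancakeRev_succ (i : Fin n)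
    (hi : 1 ≤ (i : ℕ)) :
    Fin.cycleRange i * Fin.cycleRange i * pancakeRev n (i - 1) * pancakeRev n (i + 1) =
      pancakeRev n 2 := by
  ext a
  simp only [Equiv.Perm.mul_apply, coe_pancakeRev_apply, Fin.coe_cycleRange]
  have := i.isLt
  split_ifs <;> omega

end

theorem pancake_C7_general (n k : ℕ) (hk : 4 ≤ k) (hkn : k ≤ n) :
    pancakeRev n k * pancakeRev n (k - 1) * pancakeRev n k * pancakeRev n (k - 1) *
      pancakeRev n (k - 2) * pancakeRev n k * pancakeRev n 2 = 1 := by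
  obtain ⟨i, rfl⟩ : ∃ i : Fin n, k = i + 1 :=
    ⟨⟨k - 1, by omega⟩, (Nat.sub_add_cancel (by omega)).symm⟩
  rw [Nat.add_sub_cancel, show (i : ℕ) + 1 - 2 = i - 1 by omega]
  calc _ = pancakeRev n (i + 1) * pancakeRev n i * (pancakeRev n (i + 1) * pancakeRev n i) *
        pancakeRev n (i - 1) * pancakeRev n (i + 1) * pancakeRev n 2 := by
        simp only [mul_assoc]
    _ = pancakeRev n 2 * pancakeRev n 2 := by
        rw [pancakeRev_succ_mul_pancakeRev_eq_cycleRange,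
          cycleRange_mul_cycleRange_mul_pancakeRev_pred_mul_pancakeRev_succ i (by omega)]
    _ = 1 := pancakeRev_mul_self 2

theorem pancake_C7 (n k : ℕ) (hn : 4 ≤ n) (hk : 4 ≤ k) (hkn : k ≤ n) :
    pancakeRev n k * pancakeRev n (k - 1) * pancakeRev n k * pancakeRev n (k - 1) *
      pancakeRev n (k - 2) * pancakeRev n k * pancakeRev n 2 = 1 :=
  pancake_C7_general n k hk hkn
end

section
/- For any n ≥ 4 and any integers i, j, k with 2 ≤ i < j ≤ k-1 and 4 ≤ k ≤ n, the product r_k r_j r_i r_j r_k r_{k-j+i} r_i r_{k-j+i} equals the identity permutation of {1,...,n}. -/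
/-!
Conjugating a prefix reversal `r_i` by `r_j` reverses the block of positions `j-i+1, …, j`, and
conjugating that block reversal by `r_k` reverses the block `k-j+1, …, k-j+i`. The latter is also
`r_{k-j+i} r_i r_{k-j+i}`, so the product is the square of a block reversal, i.e. the identity.
-/

/-- The reversal of the block of `l` positions starting at the `0`-indexed position `s`
(the identity unless the block fits in `Fin n`). -/
def blockRev (n s l : ℕ) : Equiv.Perm (Fin n) :=
  Function.Involutive.toPerm
    (fun a => if h : s ≤ a.val ∧ a.val < s + l ∧ s + l ≤ n then ⟨2 * s + l - 1 - a.val, by omega⟩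
      else a)
    (by
      intro a
      by_cases h : s ≤ a.val ∧ a.val < s + l ∧ s + l ≤ n
      · have h' : s ≤ 2 * s + l - 1 - a.val ∧ 2 * s + l - 1 - a.val < s + l ∧ s + l ≤ n := by
          omega
        simp only [dif_pos h, dif_pos h']
        ext
        simp only
        omega
      · simp only [dif_neg h])

lemma blockRev_val (n s l : ℕ) (a : Fin n) :
    (blockRev n s l a).val =
      if s ≤ a.val ∧ a.val < s + l ∧ s + l ≤ n then 2 * s + l - 1 - a.val else a.val := by
  simp only [blockRev, Function.Involutive.toPerm, Equiv.coe_fn_mk]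
  split_ifs <;> rfl

lemma blockRev_mul_self (n s l : ℕ) : blockRev n s l * blockRev n s l = 1 := by
  ext a
  simp only [Equiv.Perm.mul_apply, Equiv.Perm.one_apply, blockRev_val]
  split_ifs <;> omega

lemma pancakeRev_val (n m : ℕ) (a : Fin n) :
    (pancakeRev n m a).val = if a.val < m ∧ m ≤ n then m - 1 - a.val else a.val := by
  simp only [pancakeRev, Function.Involutive.toPerm, Equiv.coe_fn_mk]
  split_ifs <;> rfl

lemma pancakeRev_eq_blockRev_zero (n m : ℕ) : pancakeRev n m = blockRev n 0 m := by
  ext a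
  rw [pancakeRev_val, blockRev_val]
  split_ifs <;> omega

lemma pancakeRev_mul_blockRev_mul_pancakeRev {n s l m : ℕ} (hm : s + l ≤ m) (hmn : m ≤ n) :
    pancakeRev n m * blockRev n s l * pancakeRev n m = blockRev n (m - s - l) l := by
  ext a
  simp only [Equiv.Perm.mul_apply, pancakeRev_val, blockRev_val]
  split_ifs <;> omega

lemma pancakeRev_conj_pancakeRev {n i m : ℕ} (him : i ≤ m) (hmn : m ≤ n) :
    pancakeRev n m * pancakeRev n i * pancakeRev n m = blockRev n (m - i) i := by
  rw [pancakeRev_eq_blockRev_zero n i, pancakeRev_mul_blockRev_mul_pancakeRev (by omega) hmn,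
    Nat.sub_zero]

theorem pancake_C8_1_general (n i j k : ℕ) (hij : i < j)
    (hjk : j ≤ k - 1) (hkn : k ≤ n) :
    pancakeRev n k * pancakeRev n j * pancakeRev n i * pancakeRev n j * pancakeRev n k *
      pancakeRev n (k - j + i) * pancakeRev n i * pancakeRev n (k - j + i) = 1 := by
  have hinner : pancakeRev n j * pancakeRev n i * pancakeRev n j = blockRev n (j - i) i :=
    pancakeRev_conj_pancakeRev hij.le (by omega)
  have houter : pancakeRev n k * blockRev n (j - i) i * pancakeRev n k = blockRev n (k - j) i := by
    rw [pancakeRev_mul_blockRev_mul_pancakeRev (by omega) hkn]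
    congr 1
    omega
  have hright : pancakeRev n (k - j + i) * pancakeRev n i * pancakeRev n (k - j + i) =
      blockRev n (k - j) i := by
    rw [pancakeRev_conj_pancakeRev (by omega) (by omega), Nat.add_sub_cancel]
  calc _ = pancakeRev n k * (pancakeRev n j * pancakeRev n i * pancakeRev n j) * pancakeRev n k *
        (pancakeRev n (k - j + i) * pancakeRev n i * pancakeRev n (k - j + i)) := by
          simp only [mul_assoc]
    _ = 1 := by rw [hinner, houter, hright, blockRev_mul_self]

theorem pancake_C8_1 (n i j k : ℕ) (hn : 4 ≤ n) (hi : 2 ≤ i) (hij : i < j)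
    (hjk : j ≤ k - 1) (hk : 4 ≤ k) (hkn : k ≤ n) :
    pancakeRev n k * pancakeRev n j * pancakeRev n i * pancakeRev n j * pancakeRev n k *
      pancakeRev n (k - j + i) * pancakeRev n i * pancakeRev n (k - j + i) = 1 :=
  pancake_C8_1_general n i j k hij hjk hkn
end

section
/- For any n ≥ 4 and any k with 4 ≤ k ≤ n, the product r_k r_{k-1} r_2 r_{k-1} r_k r_2 r_3 r_2 equals the identity permutation of {1,...,n}. -/
open Equiv

lemma pancakeRev_apply {n m : ℕ} (a : Fin n) :
    pancakeRev n m a = if h : a.val < m ∧ m ≤ n then ⟨m - 1 - a.val, by omega⟩ else a :=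
  rfl

lemma pancakeRev_mk {n m i : ℕ} (hm : m ≤ n) (hi : i < m) :
    pancakeRev n m ⟨i, hi.trans_le hm⟩ = ⟨m - 1 - i, by omega⟩ := by
  simp [pancakeRev_apply, hi, hm]

lemma pancakeRev_of_le {n m : ℕ} (a : Fin n) (ha : m ≤ a.val) : pancakeRev n m a = a := by
  simp [pancakeRev_apply, ha.not_gt]

lemma pancakeRev_inv (n m : ℕ) : (pancakeRev n m)⁻¹ = pancakeRev n m :=
  Function.Involutive.toPerm_symm _

lemma pancakeRev_mul_swap_mul_self {n : ℕ} (m : ℕ) (x y : Fin n) :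
    pancakeRev n m * swap x y * pancakeRev n m =
      swap (pancakeRev n m x) (pancakeRev n m y) := by
  rw [swap_apply_apply, pancakeRev_inv]

lemma pancakeRev_two {n : ℕ} (hn : 2 ≤ n) :
    pancakeRev n 2 = swap ⟨0, by omega⟩ ⟨1, by omega⟩ := by
  ext a
  rw [pancakeRev_apply, swap_apply_def]
  split_ifs <;> simp only [Fin.ext_iff] at * <;> omega

lemma pancakeRev_three {n : ℕ} (hn : 3 ≤ n) :
    pancakeRev n 3 = swap ⟨0, by omega⟩ ⟨2, by omega⟩ := by
  ext a
  rw [pancakeRev_apply, swap_apply_def]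
  split_ifs <;> simp only [Fin.ext_iff] at * <;> omega

theorem pancake_C8_2_general (n k : ℕ) (hk : 4 ≤ k) (hkn : k ≤ n) :
    pancakeRev n k * pancakeRev n (k - 1) * pancakeRev n 2 * pancakeRev n (k - 1) *
      pancakeRev n k * pancakeRev n 2 * pancakeRev n 3 * pancakeRev n 2 = 1 := by
  have hk1 : k - 1 ≤ n := by omega
  have hconj_outer : pancakeRev n k * (pancakeRev n (k - 1) * pancakeRev n 2 * pancakeRev n (k - 1))
      * pancakeRev n k = swap ⟨1, by omega⟩ ⟨2, by omega⟩ := by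
    rw [pancakeRev_two (by omega), pancakeRev_mul_swap_mul_self, pancakeRev_mul_swap_mul_self,
      pancakeRev_mk hk1 (by omega), pancakeRev_mk hk1 (by omega), pancakeRev_mk hkn (by omega),
      pancakeRev_mk hkn (by omega)]
    congr 2 <;> omega
  have hconj_inner : pancakeRev n 2 * pancakeRev n 3 * pancakeRev n 2 =
      swap ⟨1, by omega⟩ ⟨2, by omega⟩ := by
    rw [pancakeRev_three (by omega), pancakeRev_mul_swap_mul_self,
      pancakeRev_mk (i := 0) (by omega) (by omega), pancakeRev_of_le (m := 2) ⟨2, by omega⟩ le_rfl]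
  calc _ = (pancakeRev n k * (pancakeRev n (k - 1) * pancakeRev n 2 * pancakeRev n (k - 1))
          * pancakeRev n k) * (pancakeRev n 2 * pancakeRev n 3 * pancakeRev n 2) := by
        simp only [mul_assoc]
    _ = 1 := by rw [hconj_outer, hconj_inner, swap_mul_self]

theorem pancake_C8_2 (n k : ℕ) (hn : 4 ≤ n) (hk : 4 ≤ k) (hkn : k ≤ n) :
    pancakeRev n k * pancakeRev n (k - 1) * pancakeRev n 2 * pancakeRev n (k - 1) *
      pancakeRev n k * pancakeRev n 2 * pancakeRev n 3 * pancakeRev n 2 = 1 :=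
  pancake_C8_2_general n k hk hkn
end

section
/- For any n ≥ 5, any k with 5 ≤ k ≤ n, and any i with 3 ≤ i ≤ k-2, the product r_k r_{k-i+1} r_k r_i r_k r_{k-i} r_{k-1} r_{i-1} equals the identity permutation of {1,...,n}. -/
/-!
On `ℕ`, let `prefixRev m` reverse `[0, m)` and fix everything else; `pancakeRev n m` is its
restriction to `Fin n` (0-indexed). The identity then holds on all of `ℕ` as soon as
`0 < i ≤ k`: the right-hand four reversals send `x < i - 1` to `i - 1 - x`, `i - 1 ≤ x < k - 1`
to `k + i - 2 - x` and `k - 1` to `0`, and the left-hand four undo exactly this.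
-/

def prefixRev (m x : ℕ) : ℕ := if x < m then m - 1 - x else x

lemma prefixRev_of_lt {m x : ℕ} (h : x < m) : prefixRev m x = m - 1 - x := if_pos h

lemma prefixRev_of_le {m x : ℕ} (h : m ≤ x) : prefixRev m x = x := if_neg h.not_gt

lemma pancakeRev_apply_val {n m : ℕ} (hm : m ≤ n) (a : Fin n) :
    (pancakeRev n m a).val = prefixRev m a := by
  unfold pancakeRev prefixRev
  simp only [Function.Involutive.coe_toPerm, hm, and_true]
  split_ifs <;> rfl

lemma prefixRev_word_eq_self {i k : ℕ} (hi : 0 < i) (hik : i ≤ k) (x : ℕ) :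
    prefixRev k (prefixRev (k - i + 1) (prefixRev k (prefixRev i
      (prefixRev k (prefixRev (k - i) (prefixRev (k - 1) (prefixRev (i - 1) x))))))) = x := by
  obtain hx | hx | hx | hx : x < i - 1 ∨ i - 1 ≤ x ∧ x < k - 1 ∨ x = k - 1 ∨ k ≤ x := by omega
  all_goals simp (disch := omega) only [prefixRev_of_lt, prefixRev_of_le] <;> omega

theorem pancake_C8_4_general (n i k : ℕ) (hkn : k ≤ n)
    (hi : 3 ≤ i) (hik : i ≤ k - 2) :
    pancakeRev n k * pancakeRev n (k - i + 1) * pancakeRev n k * pancakeRev n i *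
      pancakeRev n k * pancakeRev n (k - i) * pancakeRev n (k - 1) * pancakeRev n (i - 1) =
      1 := by
  ext a
  simp (disch := omega) only [Equiv.Perm.mul_apply, Equiv.Perm.one_apply, pancakeRev_apply_val]
  exact prefixRev_word_eq_self (by omega) (by omega) a

theorem pancake_C8_4 (n i k : ℕ) (hn : 5 ≤ n) (hk : 5 ≤ k) (hkn : k ≤ n)
    (hi : 3 ≤ i) (hik : i ≤ k - 2) :
    pancakeRev n k * pancakeRev n (k - i + 1) * pancakeRev n k * pancakeRev n i *
      pancakeRev n k * pancakeRev n (k - i) * pancakeRev n (k - 1) * pancakeRev n (i - 1) =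
      1 :=
  pancake_C8_4_general n i k hkn hi hik
end

section
/- For any n ≥ 4 and any integers i, j, k with 2 ≤ i < j ≤ k-1 and 4 ≤ k ≤ n, the product (r_k r_{k-j+1} r_k r_i)^2 equals the identity permutation of {1,...,n}. -/
/-!
`r_i` only moves the first `i` entries, while `r_k r_{k-j+1} r_k` reverses the block of entries
`j, ..., k` and fixes the first `j - 1` of them. Since `i < j`, the two factors are disjoint,
hence commuting, involutions, and so their product squares to the identity.
-/

namespace pancakeRev

variable {n : ℕ}

lemma val_apply (n m : ℕ) (a : Fin n) :
    (pancakeRev n m a).val = if a.val < m ∧ m ≤ n then m - 1 - a.val else a.val := by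
  simp only [pancakeRev, Function.Involutive.toPerm, Equiv.coe_fn_mk]
  split_ifs <;> rfl

lemma apply_of_le {m : ℕ} {a : Fin n} (ha : m ≤ a.val) : pancakeRev n m a = a :=
  Fin.ext <| by rw [val_apply]; split_ifs <;> omega

lemma mul_self (n m : ℕ) : pancakeRev n m * pancakeRev n m = 1 := by
  ext a
  simp only [Equiv.Perm.mul_apply, Equiv.Perm.one_apply, val_apply]
  split_ifs <;> omega

lemma inv (n m : ℕ) : (pancakeRev n m)⁻¹ = pancakeRev n m :=
  inv_eq_of_mul_eq_one_right (mul_self n m)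

lemma conj_sq (n k m : ℕ) : (pancakeRev n k * pancakeRev n m * pancakeRev n k) ^ 2 = 1 := by
  calc (pancakeRev n k * pancakeRev n m * pancakeRev n k) ^ 2
      = (pancakeRev n k * pancakeRev n m * (pancakeRev n k)⁻¹) ^ 2 := by rw [inv]
    _ = pancakeRev n k * pancakeRev n m ^ 2 * (pancakeRev n k)⁻¹ := conj_pow
    _ = 1 := by rw [sq, mul_self, mul_one, mul_inv_cancel]

/-- `r_k` sends the first `k - m` entries beyond position `m`, where `r_m` does not act. -/
lemma conj_apply_of_lt {k m : ℕ} (hmk : m ≤ k) (hkn : k ≤ n) {a : Fin n} (ha : a.val < k - m) :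
    (pancakeRev n k * pancakeRev n m * pancakeRev n k) a = a := by
  have hmoved : m ≤ (pancakeRev n k a).val := by rw [val_apply]; split_ifs <;> omega
  rw [Equiv.Perm.mul_apply, Equiv.Perm.mul_apply, apply_of_le hmoved, ← Equiv.Perm.mul_apply,
    mul_self, Equiv.Perm.one_apply]

lemma disjoint_conj {i k m : ℕ} (hmk : m ≤ k) (hkn : k ≤ n) (hi : i ≤ k - m) :
    (pancakeRev n k * pancakeRev n m * pancakeRev n k).Disjoint (pancakeRev n i) := by
  intro a
  by_cases ha : a.val < i
  · exact .inl (conj_apply_of_lt hmk hkn (by omega))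
  · exact .inr (apply_of_le (by omega))

end pancakeRev

theorem pancake_C8_7_general (n i j k : ℕ) (hij : i < j)
    (hjk : j ≤ k - 1) (hkn : k ≤ n) :
    (pancakeRev n k * pancakeRev n (k - j + 1) * pancakeRev n k * pancakeRev n i) ^ 2 =
      1 := by
  have hdisj := pancakeRev.disjoint_conj (i := i) (m := k - j + 1) (by omega) hkn (by omega)
  rw [hdisj.commute.mul_pow, pancakeRev.conj_sq, sq (pancakeRev n i), pancakeRev.mul_self,
    one_mul]

theorem pancake_C8_7 (n i j k : ℕ) (hn : 4 ≤ n) (hi : 2 ≤ i) (hij : i < j)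
    (hjk : j ≤ k - 1) (hk : 4 ≤ k) (hkn : k ≤ n) :
    (pancakeRev n k * pancakeRev n (k - j + 1) * pancakeRev n k * pancakeRev n i) ^ 2 =
      1 :=
  pancake_C8_7_general n i j k hij hjk hkn
end

section
/- For any n ≥ 5, the product (r_n r_{n-1} r_{n-2} r_{n-1})^2 equals the identity permutation of {1,...,n}; hence the Big-3 cubic Pancake graph Cay(Sym_n, {r_{n-2}, r_{n-1}, r_n}) contains a cycle of length 8. -/
lemma val_pancakeRev (n m : ℕ) (a : Fin n) :
    (pancakeRev n m a : ℕ) = if (a : ℕ) < m ∧ m ≤ n then m - 1 - a else a := by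
  unfold pancakeRev
  split_ifs with h
  · simp only [Function.Involutive.toPerm, Equiv.coe_fn_mk, dif_pos h]
  · simp only [Function.Involutive.toPerm, Equiv.coe_fn_mk, dif_neg h]

/-- `r_{n-1} r_{n-2} r_{n-1}` reverses the entries strictly between the first and the last one;
`r_n` undoes that reversal and exchanges the two ends. -/
theorem pancakeRev_mul_eq_swap {n : ℕ} (hn : 0 < n) :
    pancakeRev n n * pancakeRev n (n - 1) * pancakeRev n (n - 2) * pancakeRev n (n - 1) =
      Equiv.swap ⟨0, hn⟩ ⟨n - 1, by omega⟩ := by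
  ext a
  have ha := a.isLt
  simp only [Fin.ext_iff, Equiv.Perm.mul_apply, val_pancakeRev, Equiv.swap_apply_def,
    apply_ite Fin.val]
  split_ifs <;> omega

theorem pancake_C8_BS2_general (n : ℕ) :
    (pancakeRev n n * pancakeRev n (n - 1) * pancakeRev n (n - 2) * pancakeRev n (n - 1)) ^ 2 =
      1 := by
  rcases Nat.eq_zero_or_pos n with rfl | hn
  · exact Subsingleton.elim _ _
  · rw [pancakeRev_mul_eq_swap hn, sq, Equiv.swap_mul_self]

theorem pancake_C8_BS2 (n : ℕ) (hn : 5 ≤ n) :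
    (pancakeRev n n * pancakeRev n (n - 1) * pancakeRev n (n - 2) * pancakeRev n (n - 1)) ^ 2 =
      1 :=
  pancake_C8_BS2_general n
end

section
/- For any n ≥ 4 and any a, b with 2 ≤ a < b ≤ n, the product r_b r_a r_b r_a r_b r_a (i.e., (r_b r_a)^3) is not the identity permutation of {1,...,n} unless (a,b) = (2,3); consequently the Pancake graph P_n has no 6-cycle of form (r_b r_a)^3 except (r_3 r_2)^3. -/
def flipPrefix (m x : ℕ) : ℕ := if x < m then m - 1 - x else x

lemma coe_pancakeRev_apply_s14 {n m : ℕ} (hm : m ≤ n) (x : Fin n) :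
    (pancakeRev n m x : ℕ) = flipPrefix m x := by
  by_cases hx : (x : ℕ) < m <;> simp [pancakeRev, flipPrefix, hx, hm]

lemma coe_pancakeRev_mul_pow_apply {n a b : ℕ} (ha : a ≤ n) (hb : b ≤ n) (k : ℕ) (x : Fin n) :
    (((pancakeRev n b * pancakeRev n a) ^ k) x : ℕ) = (flipPrefix b ∘ flipPrefix a)^[k] x := by
  induction k generalizing x with
  | zero => rfl
  | succ k ih =>
    rw [pow_succ, Equiv.Perm.mul_apply, ih, Function.iterate_succ_apply, Equiv.Perm.mul_apply,
      Function.comp_apply, coe_pancakeRev_apply_s14 hb, coe_pancakeRev_apply_s14 ha]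

lemma flipPrefix_comp_iterate_three_zero {a b : ℕ} (ha : 2 ≤ a) (hab : a < b)
    (h : (flipPrefix b ∘ flipPrefix a)^[3] 0 = 0) : b = 2 * a - 1 := by
  -- The orbit is `0 ↦ b - a ↦ a - 1 ↦ b - 1` if `2a ≤ b`, and otherwise
  -- `0 ↦ b - a ↦ 2b - 2a ↦ 3b - 3a` or `2a - b - 1` according as `2b < 3a` or not.
  simp only [Function.iterate_succ, Function.iterate_zero, Function.comp, id, flipPrefix] at h
  split_ifs at h <;> omega

lemma flipPrefix_comp_iterate_three_one {a : ℕ} (ha : 2 ≤ a) :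
    (flipPrefix (2 * a - 1) ∘ flipPrefix a)^[3] 1 = 2 * a - 3 := by
  simp only [Function.iterate_succ, Function.iterate_zero, Function.comp, id, flipPrefix]
  split_ifs <;> omega

theorem pancake_no_other_sixCycles_general (n a b : ℕ) (ha : 2 ≤ a)
    (hab : a < b) (hb : b ≤ n) (hne : ¬(a = 2 ∧ b = 3)) :
    (pancakeRev n b * pancakeRev n a) ^ 3 ≠ 1 := by
  intro h
  have hfix (x : Fin n) : (flipPrefix b ∘ flipPrefix a)^[3] x = x := by
    rw [← coe_pancakeRev_mul_pow_apply (hab.le.trans hb) hb, h, Equiv.Perm.one_apply]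
  have hb' : b = 2 * a - 1 := flipPrefix_comp_iterate_three_zero ha hab (hfix ⟨0, by omega⟩)
  have hone : (flipPrefix b ∘ flipPrefix a)^[3] 1 = 1 := hfix ⟨1, by omega⟩
  rw [hb', flipPrefix_comp_iterate_three_one ha] at hone
  omega

theorem pancake_no_other_sixCycles (n a b : ℕ) (hn : 4 ≤ n) (ha : 2 ≤ a)
    (hab : a < b) (hb : b ≤ n) (hne : ¬(a = 2 ∧ b = 3)) :
    (pancakeRev n b * pancakeRev n a) ^ 3 ≠ 1 :=
  pancake_no_other_sixCycles_general n a b ha hab hb hne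
end

section
/- For any n ≥ 4 and any prefix-reversals r_a, r_b with 2 ≤ a ≠ b ≤ n, the product (r_a r_b)^2 is not the identity permutation of {1,...,n}; i.e., the Pancake graph P_n contains no 4-cycles. -/
theorem mul_pow_eq_one_comm {G : Type*} [Group G] {x y : G} {k : ℕ} :
    (x * y) ^ k = 1 ↔ (y * x) ^ k = 1 := by
  rw [show y * x = x⁻¹ * (x * y) * x⁻¹⁻¹ by group, conj_pow, conj_eq_one_iff]

namespace pancakeRev

variable {n m : ℕ}

theorem val_apply_of_lt (hm : m ≤ n) {x : Fin n} (hx : x.val < m) :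
    (pancakeRev n m x).val = m - 1 - x.val := by
  simp [pancakeRev, hx, hm]

theorem apply_of_le_s15 {x : Fin n} (hx : m ≤ x.val) : pancakeRev n m x = x := by
  simp only [pancakeRev]
  exact dif_neg (by omega)

theorem val_mul_sq_apply_zero {a b : ℕ} (hab : a < b) (hbn : b ≤ n) :
    (((pancakeRev n a * pancakeRev n b) ^ 2) ⟨0, by omega⟩).val = a - 1 := by
  have hb0 : pancakeRev n b ⟨0, by omega⟩ = ⟨b - 1, by omega⟩ :=
    Fin.ext (val_apply_of_lt hbn (by simp; omega))
  have hbb : pancakeRev n b ⟨b - 1, by omega⟩ = ⟨0, by omega⟩ :=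
    Fin.ext (by rw [val_apply_of_lt hbn (by simp; omega)]; simp)
  rw [sq, Equiv.Perm.mul_apply, Equiv.Perm.mul_apply, Equiv.Perm.mul_apply, hb0,
    apply_of_le_s15 (m := a) (x := ⟨b - 1, _⟩) (by simp; omega), hbb]
  by_cases ha : a = 0
  · subst ha
    rw [apply_of_le_s15 (Nat.zero_le _)]
  · rw [val_apply_of_lt (by omega) (by simp; omega), Nat.sub_zero]

end pancakeRev

theorem pancake_no_fourCycles_general (n a b : ℕ) (ha : 2 ≤ a) (han : a ≤ n)
    (hb : 2 ≤ b) (hbn : b ≤ n) (hab : a ≠ b) :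
    (pancakeRev n a * pancakeRev n b) ^ 2 ≠ 1 := by
  wlog hlt : a < b generalizing a b
  · exact fun h => this b a hb hbn ha han hab.symm (by omega) (mul_pow_eq_one_comm.mp h)
  intro h
  have h0 := pancakeRev.val_mul_sq_apply_zero hlt hbn
  simp only [h, Equiv.Perm.one_apply, Fin.val_mk] at h0
  omega

theorem pancake_no_fourCycles (n a b : ℕ) (hn : 4 ≤ n) (ha : 2 ≤ a) (han : a ≤ n)
    (hb : 2 ≤ b) (hbn : b ≤ n) (hab : a ≠ b) :
    (pancakeRev n a * pancakeRev n b) ^ 2 ≠ 1 :=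
  pancake_no_fourCycles_general n a b ha han hb hbn hab
end
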